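/- Under the hypotheses of the quantum pooling theorem — (ρ_{x₁,x₂})_{(x₁,x₂)∈X₁×X₂} a hybrid state over X₁ × X₂ and ℂⁿ with positive definite quantum marginal ρ_B, statistics R₁(x₁) = ρ_{B|X₁=x₁}, R₂(x₂) = ρ_{B|X₂=x₂}, and the factorization ρ_B^{-1/2} M_{a,b} ρ_B^{-1/2} = (ρ_B^{-1/2} M_a ρ_B^{-1/2}) · (ρ_B^{-1/2} N_b ρ_B^{-1/2}) for all values a, b — the pooled expression is symmetric under exchange of the two agents: for any values σ₁ in the range of R₁ and σ₂ in the range of R₂, σ₁ · ρ_B^{-1} · σ₂ = σ₂ · ρ_B^{-1} · σ₁. -/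

import Mathlib

open scoped BigOperators ComplexOrder

noncomputable section

open Classical in
/-- The inverse positive square root `M^{-1/2}` of a matrix (defined to be `0` if `M` is
not positive semidefinite). -/
def invSqrt {d : Type*} [Fintype d] [DecidableEq d] (M : Matrix d d ℂ) :
    Matrix d d ℂ :=
  if h : M.PosSemidef then
    (h.1.eigenvectorUnitary.1 * Matrix.diagonal ((↑) ∘ (Real.sqrt ∘ h.1.eigenvalues)) *
      (star h.1.eigenvectorUnitary : Matrix d d ℂ))⁻¹ else 0

open Classical

/-- The quantum marginal `ρ_B = Σ_{x₁,x₂} ρ_{x₁,x₂}` of a hybrid state. -/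
def qB {X₁ X₂ : Type*} [Fintype X₁] [Fintype X₂] {n : ℕ}
    (ρ : X₁ → X₂ → Matrix (Fin n) (Fin n) ℂ) : Matrix (Fin n) (Fin n) ℂ :=
  ∑ x₁, ∑ x₂, ρ x₁ x₂

/-- The unnormalized marginal `Σ_{x₂} ρ_{x₁,x₂}` corresponding to `X₁ = x₁`. -/
def qmarg₁ {X₁ X₂ : Type*} [Fintype X₂] {n : ℕ}
    (ρ : X₁ → X₂ → Matrix (Fin n) (Fin n) ℂ) (x₁ : X₁) : Matrix (Fin n) (Fin n) ℂ :=
  ∑ x₂, ρ x₁ x₂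

/-- The unnormalized marginal `Σ_{x₁} ρ_{x₁,x₂}` corresponding to `X₂ = x₂`. -/
def qmarg₂ {X₁ X₂ : Type*} [Fintype X₁] {n : ℕ}
    (ρ : X₁ → X₂ → Matrix (Fin n) (Fin n) ℂ) (x₂ : X₂) : Matrix (Fin n) (Fin n) ℂ :=
  ∑ x₁, ρ x₁ x₂

/-- The statistic `R₁(x₁) = ρ_{B|X₁=x₁}`. -/
def qR₁ {X₁ X₂ : Type*} [Fintype X₂] {n : ℕ}
    (ρ : X₁ → X₂ → Matrix (Fin n) (Fin n) ℂ) (x₁ : X₁) : Matrix (Fin n) (Fin n) ℂ :=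
  ((qmarg₁ ρ x₁).trace)⁻¹ • qmarg₁ ρ x₁

/-- The statistic `R₂(x₂) = ρ_{B|X₂=x₂}`. -/
def qR₂ {X₁ X₂ : Type*} [Fintype X₁] {n : ℕ}
    (ρ : X₁ → X₂ → Matrix (Fin n) (Fin n) ℂ) (x₂ : X₂) : Matrix (Fin n) (Fin n) ℂ :=
  ((qmarg₂ ρ x₂).trace)⁻¹ • qmarg₂ ρ x₂

/-- `M_{a,b} = Σ_{x₁ : R₁(x₁)=a} Σ_{x₂ : R₂(x₂)=b} ρ_{x₁,x₂}`. -/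
def Mab {X₁ X₂ : Type*} [Fintype X₁] [Fintype X₂] {n : ℕ}
    (ρ : X₁ → X₂ → Matrix (Fin n) (Fin n) ℂ) (a b : Matrix (Fin n) (Fin n) ℂ) :
    Matrix (Fin n) (Fin n) ℂ :=
  ∑ x₁, ∑ x₂, if qR₁ ρ x₁ = a ∧ qR₂ ρ x₂ = b then ρ x₁ x₂ else 0

/-- `M_a = Σ_{x₁ : R₁(x₁)=a} Σ_{x₂} ρ_{x₁,x₂}`. -/
def Ma {X₁ X₂ : Type*} [Fintype X₁] [Fintype X₂] {n : ℕ}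
    (ρ : X₁ → X₂ → Matrix (Fin n) (Fin n) ℂ) (a : Matrix (Fin n) (Fin n) ℂ) :
    Matrix (Fin n) (Fin n) ℂ :=
  ∑ x₁, if qR₁ ρ x₁ = a then qmarg₁ ρ x₁ else 0

/-- `N_b = Σ_{x₁} Σ_{x₂ : R₂(x₂)=b} ρ_{x₁,x₂}`. -/
def Nb {X₁ X₂ : Type*} [Fintype X₁] [Fintype X₂] {n : ℕ}
    (ρ : X₁ → X₂ → Matrix (Fin n) (Fin n) ℂ) (b : Matrix (Fin n) (Fin n) ℂ) :
    Matrix (Fin n) (Fin n) ℂ :=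
  ∑ x₂, if qR₂ ρ x₂ = b then qmarg₂ ρ x₂ else 0



section Aux

open Matrix

def Matrix.PosSemidef.sqrt {d : Type*} [Fintype d] [DecidableEq d] {M : Matrix d d ℂ}
    (h : M.PosSemidef) : Matrix d d ℂ :=
  h.1.eigenvectorUnitary.1 * Matrix.diagonal ((↑) ∘ (Real.sqrt ∘ h.1.eigenvalues)) *
    (star h.1.eigenvectorUnitary : Matrix d d ℂ)

lemma Matrix.PosSemidef.posSemidef_sqrt {d : Type*} [Fintype d] [DecidableEq d]
    {M : Matrix d d ℂ} (h : M.PosSemidef) : h.sqrt.PosSemidef := by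
  have hD : (Matrix.diagonal ((↑) ∘ (Real.sqrt ∘ h.1.eigenvalues)) : Matrix d d ℂ).PosSemidef := by
    rw [posSemidef_diagonal_iff]
    intro i
    exact Complex.zero_le_real.mpr (Real.sqrt_nonneg _)
  have := hD.mul_mul_conjTranspose_same (h.1.eigenvectorUnitary : Matrix d d ℂ)
  rw [Matrix.PosSemidef.sqrt, Matrix.star_eq_conjTranspose]
  exact this

lemma Matrix.PosSemidef.sqrt_mul_self {d : Type*} [Fintype d] [DecidableEq d]
    {M : Matrix d d ℂ} (h : M.PosSemidef) : h.sqrt * h.sqrt = M := by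
  have hu : (star h.1.eigenvectorUnitary : Matrix d d ℂ) * h.1.eigenvectorUnitary.1 = 1 :=
    Unitary.coe_star_mul_self _
  conv_rhs => rw [h.1.spectral_theorem, Unitary.conjStarAlgAut_apply]
  rw [Matrix.PosSemidef.sqrt]
  calc _ = h.1.eigenvectorUnitary.1 * (Matrix.diagonal ((↑) ∘ (Real.sqrt ∘ h.1.eigenvalues)) *
        ((star h.1.eigenvectorUnitary : Matrix d d ℂ) * h.1.eigenvectorUnitary.1) *
        Matrix.diagonal ((↑) ∘ (Real.sqrt ∘ h.1.eigenvalues))) *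
        (star h.1.eigenvectorUnitary : Matrix d d ℂ) := by simp only [Matrix.mul_assoc]
    _ = _ := by
      rw [hu, Matrix.mul_one, Matrix.diagonal_mul_diagonal]
      congr 3
      funext i
      simp only [Function.comp_apply, ← Complex.ofReal_mul,
        Real.mul_self_sqrt (h.eigenvalues_nonneg i)]
      rfl

lemma psd_sum' {X : Type*} [Fintype X] {n : ℕ} (f : X → Matrix (Fin n) (Fin n) ℂ)
    (h : ∀ x, (f x).PosSemidef) : (∑ x, f x).PosSemidef :=
  Finset.sum_induction f Matrix.PosSemidef (fun _ _ ha hb => ha.add hb) .zero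
    (fun x _ => h x)

lemma psd_trace_nonneg' {n : ℕ} {M : Matrix (Fin n) (Fin n) ℂ} (h : M.PosSemidef) :
    0 ≤ M.trace := by
  rw [Matrix.trace]
  refine Finset.sum_nonneg fun i _ => ?_
  exact h.diag_nonneg

lemma trace_conjTranspose_mul_self_eq_zero' {m p : Type*} [Fintype m] [Fintype p]
    [DecidableEq m] [DecidableEq p] {A : Matrix m p ℂ}
    (h : (Aᴴ * A).trace = 0) : A = 0 := by
  have h' : ∑ j : p, ∑ i : m, star (A i j) * A i j = 0 := by
    simpa [Matrix.trace, Matrix.diag, Matrix.mul_apply, Matrix.conjTranspose_apply] using h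
  have hnn : ∀ x ∈ (Finset.univ : Finset p), (0:ℂ) ≤ ∑ i, star (A i x) * A i x :=
    fun x _ => Finset.sum_nonneg fun i _ => star_mul_self_nonneg _
  ext i j
  have h2 := (Finset.sum_eq_zero_iff_of_nonneg hnn).1 h' j (Finset.mem_univ j)
  have h3 := (Finset.sum_eq_zero_iff_of_nonneg
    (fun i _ => star_mul_self_nonneg (A i j))).1 h2 i (Finset.mem_univ i)
  have h4 := mul_eq_zero.mp h3
  simp only [star_eq_zero] at h4
  simpa using h4.elim id id

lemma psd_eq_zero_of_trace' {n : ℕ} {M : Matrix (Fin n) (Fin n) ℂ} (h : M.PosSemidef)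
    (ht : M.trace = 0) : M = 0 := by
  have hM : M = h.sqrtᴴ * h.sqrt := by
    rw [h.posSemidef_sqrt.1, h.sqrt_mul_self]
  have hz : h.sqrt = 0 := trace_conjTranspose_mul_self_eq_zero' (by rw [← hM]; exact ht)
  rw [hM, hz]; simp

end Aux

open Matrix in
/-- Under the hypotheses of the quantum pooling theorem, the pooled
expression is symmetric under exchange of the two agents: for any `σ₁` in the range of
`R₁` and any `σ₂` in the range of `R₂`, `σ₁ ρ_B^{-1} σ₂ = σ₂ ρ_B^{-1} σ₁`. -/
theorem quantum_multiplicative_pooling_symmetric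
    {X₁ X₂ : Type*} [Fintype X₁] [Fintype X₂] {n : ℕ}
    (ρ : X₁ → X₂ → Matrix (Fin n) (Fin n) ℂ)
    (hpsd : ∀ x₁ x₂, (ρ x₁ x₂).PosSemidef)
    (hnorm : ∑ x₁, ∑ x₂, (ρ x₁ x₂).trace = 1)
    (hB : (qB ρ).PosDef)
    (hfact : ∀ a b : Matrix (Fin n) (Fin n) ℂ,
      invSqrt (qB ρ) * Mab ρ a b * invSqrt (qB ρ)
        = (invSqrt (qB ρ) * Ma ρ a * invSqrt (qB ρ))
          * (invSqrt (qB ρ) * Nb ρ b * invSqrt (qB ρ)))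
    (σ₁ σ₂ : Matrix (Fin n) (Fin n) ℂ)
    (hσ₁ : ∃ x₁, σ₁ = qR₁ ρ x₁) (hσ₂ : ∃ x₂, σ₂ = qR₂ ρ x₂) :
    σ₁ * (qB ρ)⁻¹ * σ₂ = σ₂ * (qB ρ)⁻¹ * σ₁ := by
  obtain ⟨x₁, hx₁⟩ := hσ₁
  obtain ⟨x₂, hx₂⟩ := hσ₂
  -- positivity facts
  have hpsd₁ : ∀ x₁, (qmarg₁ ρ x₁).PosSemidef := fun x₁ => psd_sum' _ (hpsd x₁)
  have hpsd₂ : ∀ x₂, (qmarg₂ ρ x₂).PosSemidef := fun x₂ => psd_sum' _ (fun x₁ => hpsd x₁ x₂)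
  -- Ma and Nb as scalar multiples
  set c₁ : ℂ := ∑ x, if qR₁ ρ x = σ₁ then (qmarg₁ ρ x).trace else 0 with hc₁
  set c₂ : ℂ := ∑ x, if qR₂ ρ x = σ₂ then (qmarg₂ ρ x).trace else 0 with hc₂
  have hMa : Ma ρ σ₁ = c₁ • σ₁ := by
    rw [Ma, hc₁, Finset.sum_smul]
    refine Finset.sum_congr rfl fun x _ => ?_
    by_cases h : qR₁ ρ x = σ₁
    · simp only [h, if_true]
      by_cases ht : (qmarg₁ ρ x).trace = 0
      · rw [ht, zero_smul, psd_eq_zero_of_trace' (hpsd₁ x) ht]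
      · rw [← h, qR₁, smul_smul, mul_inv_cancel₀ ht, one_smul]
    · simp [h]
  have hNb : Nb ρ σ₂ = c₂ • σ₂ := by
    rw [Nb, hc₂, Finset.sum_smul]
    refine Finset.sum_congr rfl fun x _ => ?_
    by_cases h : qR₂ ρ x = σ₂
    · simp only [h, if_true]
      by_cases ht : (qmarg₂ ρ x).trace = 0
      · rw [ht, zero_smul, psd_eq_zero_of_trace' (hpsd₂ x) ht]
      · rw [← h, qR₂, smul_smul, mul_inv_cancel₀ ht, one_smul]
    · simp [h]
  -- trivial cases where σ₁ or σ₂ is zero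
  by_cases hc₁0 : c₁ = 0
  · have hσ₁0 : σ₁ = 0 := by
      have hterm := (Finset.sum_eq_zero_iff_of_nonneg
        (fun x _ => by
          by_cases h : qR₁ ρ x = σ₁
          · simpa [h] using psd_trace_nonneg' (hpsd₁ x)
          · simp [h])).1 (hc₁ ▸ hc₁0) x₁ (Finset.mem_univ x₁)
      rw [if_pos hx₁.symm] at hterm
      rw [hx₁, qR₁, psd_eq_zero_of_trace' (hpsd₁ x₁) hterm, smul_zero]
    rw [hσ₁0]; simp
  by_cases hc₂0 : c₂ = 0
  · have hσ₂0 : σ₂ = 0 := by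
      have hterm := (Finset.sum_eq_zero_iff_of_nonneg
        (fun x _ => by
          by_cases h : qR₂ ρ x = σ₂
          · simpa [h] using psd_trace_nonneg' (hpsd₂ x)
          · simp [h])).1 (hc₂ ▸ hc₂0) x₂ (Finset.mem_univ x₂)
      rw [if_pos hx₂.symm] at hterm
      rw [hx₂, qR₂, psd_eq_zero_of_trace' (hpsd₂ x₂) hterm, smul_zero]
    rw [hσ₂0]; simp
  -- properties of the inverse square root
  have hBsd : (qB ρ).PosSemidef := hB.posSemidef
  have hS : invSqrt (qB ρ) = hBsd.sqrt⁻¹ := by rw [invSqrt, dif_pos hBsd]; rfl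
  have hdet : IsUnit hBsd.sqrt.det := by
    have hmul : hBsd.sqrt.det * hBsd.sqrt.det = (qB ρ).det := by
      rw [← Matrix.det_mul, hBsd.sqrt_mul_self]
    have hne : hBsd.sqrt.det ≠ 0 := fun h0 => hB.det_pos.ne' (by rw [← hmul, h0, mul_zero])
    exact hne.isUnit
  have hsqS : hBsd.sqrt * hBsd.sqrt⁻¹ = 1 := Matrix.mul_nonsing_inv _ hdet
  have hSsq : hBsd.sqrt⁻¹ * hBsd.sqrt = 1 := Matrix.nonsing_inv_mul _ hdet
  have hSH : (hBsd.sqrt⁻¹)ᴴ = hBsd.sqrt⁻¹ := by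
    rw [Matrix.conjTranspose_nonsing_inv, hBsd.posSemidef_sqrt.1]
  have hSS : hBsd.sqrt⁻¹ * hBsd.sqrt⁻¹ = (qB ρ)⁻¹ := by
    rw [← Matrix.mul_inv_rev, hBsd.sqrt_mul_self]
  set S := hBsd.sqrt⁻¹ with hSdef
  -- hermitian facts
  have hMab : (Mab ρ σ₁ σ₂).PosSemidef := by
    refine psd_sum' _ fun y₁ => psd_sum' _ fun y₂ => ?_
    by_cases h : qR₁ ρ y₁ = σ₁ ∧ qR₂ ρ y₂ = σ₂
    · simpa [h] using hpsd y₁ y₂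
    · simp [h, Matrix.PosSemidef.zero]
  have hMaH : (Ma ρ σ₁)ᴴ = Ma ρ σ₁ := by
    have : (Ma ρ σ₁).PosSemidef := by
      refine psd_sum' _ fun y₁ => ?_
      by_cases h : qR₁ ρ y₁ = σ₁
      · simpa [h] using hpsd₁ y₁
      · simp [h, Matrix.PosSemidef.zero]
    exact this.1
  have hNbH : (Nb ρ σ₂)ᴴ = Nb ρ σ₂ := by
    have : (Nb ρ σ₂).PosSemidef := by
      refine psd_sum' _ fun y₂ => ?_
      by_cases h : qR₂ ρ y₂ = σ₂
      · simpa [h] using hpsd₂ y₂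
      · simp [h, Matrix.PosSemidef.zero]
    exact this.1
  have h1 : S * Mab ρ σ₁ σ₂ * S = (S * Ma ρ σ₁ * S) * (S * Nb ρ σ₂ * S) := by
    have := hfact σ₁ σ₂
    rwa [hS] at this
  have hLH : (S * Mab ρ σ₁ σ₂ * S)ᴴ = S * Mab ρ σ₁ σ₂ * S := by
    simp only [Matrix.conjTranspose_mul, hMab.1.eq, hSH, Matrix.mul_assoc]
  have h2 : (S * Ma ρ σ₁ * S) * (S * Nb ρ σ₂ * S)
      = (S * Nb ρ σ₂ * S) * (S * Ma ρ σ₁ * S) := by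
    conv_lhs => rw [← h1, ← hLH, h1]
    simp only [Matrix.conjTranspose_mul, hMaH, hNbH, hSH, Matrix.mul_assoc]
  -- sandwich with sqrt to remove outer S's
  have haux1 : ∀ X : Matrix (Fin n) (Fin n) ℂ, hBsd.sqrt * (S * X) = X := fun X => by
    rw [← Matrix.mul_assoc, hsqS, Matrix.one_mul]
  have haux2 : ∀ X : Matrix (Fin n) (Fin n) ℂ, S * (S * X) = (qB ρ)⁻¹ * X := fun X => by
    rw [← Matrix.mul_assoc, hSS]
  have h3 : Ma ρ σ₁ * ((qB ρ)⁻¹ * Nb ρ σ₂) = Nb ρ σ₂ * ((qB ρ)⁻¹ * Ma ρ σ₁) := by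
    have h4 := congrArg (fun M => hBsd.sqrt * M * hBsd.sqrt) h2
    simpa only [Matrix.mul_assoc, haux1, haux2, hSsq, Matrix.mul_one] using h4
  rw [hMa, hNb] at h3
  have h5 : (c₁ * c₂) • (σ₁ * ((qB ρ)⁻¹ * σ₂)) = (c₁ * c₂) • (σ₂ * ((qB ρ)⁻¹ * σ₁)) := by
    have := h3
    simp only [Matrix.smul_mul, Matrix.mul_smul, smul_smul] at this
    rw [mul_comm c₂ c₁] at this
    exact this
  have h6 := smul_right_injective (Matrix (Fin n) (Fin n) ℂ)
    (mul_ne_zero hc₁0 hc₂0) h5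
  rw [Matrix.mul_assoc, Matrix.mul_assoc, h6]

end
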